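/- (Reduction algorithm, open boundary conditions.) Consider the Widom–Rowlinson model with M ≥ 2 particle types on the K×L square lattice Λ with open boundary conditions. Let m ∈ {1,…,M} and let σ ∈ X be a configuration such that σ(v) ∈ {0, m} for every site v in the first column c_0. Then there exists a path ω : σ → s^(m) in X with Φ_ω ≤ H(σ) + 1; in particular Φ(σ, s^(m)) − H(σ) ≤ 1. -/

import Mathlib

/-- Sites of the `K × L` square lattice with open boundary conditions:
`(j, i)` lies in column `c_j` and row `r_i`. -/
abbrev SiteO (K L : ℕ) := Fin L × Fin K

/-- Adjacency on the open lattice: the two sites agree in one coordinate and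
differ by exactly `1` in the other (no wrap-around). -/
def adjO (K L : ℕ) (v w : SiteO K L) : Prop :=
  (v.2 = w.2 ∧ ((v.1 : ℕ) + 1 = (w.1 : ℕ) ∨ (w.1 : ℕ) + 1 = (v.1 : ℕ))) ∨
  (v.1 = w.1 ∧ ((v.2 : ℕ) + 1 = (w.2 : ℕ) ∨ (w.2 : ℕ) + 1 = (v.2 : ℕ)))

/-- Widom–Rowlinson configurations with `M` particle types on the open lattice. -/
def IsWRO (K L M : ℕ) (σ : SiteO K L → ℕ) : Prop :=
  (∀ v, σ v ≤ M) ∧ ∀ v w, adjO K L v w → σ v = 0 ∨ σ w = 0 ∨ σ v = σ w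

/-- The energy `H(σ) = -#{v : σ v ≠ 0}`. -/
noncomputable def HO (K L : ℕ) (σ : SiteO K L → ℕ) : ℤ :=
  -(Nat.card {v : SiteO K L // σ v ≠ 0} : ℤ)

/-- `σ` and `σ'` are related by a single-site update: they differ at exactly
one site `v`, and moreover `σ v = 0` or `σ' v = 0`. -/
def UpdO (K L : ℕ) (σ σ' : SiteO K L → ℕ) : Prop :=
  ∃ v, (σ v = 0 ∨ σ' v = 0) ∧ σ v ≠ σ' v ∧ ∀ w, w ≠ v → σ w = σ' w

/-- A path `ω : σ → σ'`: a finite nonempty sequence of WR configurations from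
`σ` to `σ'` whose consecutive configurations coincide or are related by a
single-site update. -/
def IsPathO (K L M : ℕ) (ω : List (SiteO K L → ℕ)) (σ σ' : SiteO K L → ℕ) : Prop :=
  ω ≠ [] ∧ ω.head? = some σ ∧ ω.getLast? = some σ' ∧
    (∀ η ∈ ω, IsWRO K L M η) ∧
    ω.Chain' (fun η η' => η = η' ∨ UpdO K L η η')

/-- The height `Φ_ω` of a path: the maximum energy along it. -/
noncomputable def heightO (K L : ℕ) (ω : List (SiteO K L → ℕ)) : ℤ :=
  sSup {h : ℤ | ∃ η ∈ ω, HO K L η = h}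

/-- The communication height `Φ(σ,σ')`: the minimal height over all paths
`ω : σ → σ'`. -/
noncomputable def commO (K L M : ℕ) (σ σ' : SiteO K L → ℕ) : ℤ :=
  sInf {h : ℤ | ∃ ω, IsPathO K L M ω σ σ' ∧ heightO K L ω = h}

/-- The set `X^s = {s^(1),…,s^(M)}` of stable configurations. -/
def stableO (K L M : ℕ) : Set (SiteO K L → ℕ) :=
  {σ | ∃ m : ℕ, 1 ≤ m ∧ m ≤ M ∧ σ = fun _ => m}

/-!
Clear the wrong particles (types other than `m`) one at a time, always taking a `v` in the
leftmost column that contains any. Column `c_0` is clean, so `v` has a left neighbour `u`; `u` and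
its neighbours other than `v` lie strictly left of `v`'s column, hence are empty or of type `m`,
and `u` is empty because it touches `v`. Removing `v` (energy `+1`) and then placing an `m` at `u`
(energy `-1`) stays below `H(σ) + 1`. Once no wrong particle is left, filling the empty sites with
`m` only lowers the energy. Both moves decrease the number of sites not of type `m`.
-/

open Function Set

section Updates

variable {α β : Type*} [DecidableEq α]

lemma setOf_update_ne_self (f : α → β) (a : α) (b : β) :
    {x | update f a b x ≠ b} = {x | f x ≠ b} \ {a} := by
  ext x
  rcases eq_or_ne x a with rfl | hx <;> simp [*]

lemma setOf_update_ne_of_ne (f : α → β) (a : α) {b c : β} (hb : b ≠ c) :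
    {x | update f a b x ≠ c} = insert a {x | f x ≠ c} := by
  ext x
  rcases eq_or_ne x a with rfl | hx <;> simp [*]

lemma forall_update_eq_zero_or_eq {P : α → Prop} {f : α → ℕ} {m b : ℕ}
    (hf : ∀ x, P x → f x = 0 ∨ f x = m) (hb : b = 0 ∨ b = m) (a : α) :
    ∀ x, P x → update f a b x = 0 ∨ update f a b x = m := by
  intro x hx
  rcases eq_or_ne x a with rfl | hxa
  · simpa using hb
  · simpa [hxa] using hf x hx

end Updates

section Lattice

variable {K L M : ℕ}

lemma adjO_symm {v w : SiteO K L} (h : adjO K L v w) : adjO K L w v := by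
  rcases h with ⟨h₁, h₂⟩ | ⟨h₁, h₂⟩
  · exact Or.inl ⟨h₁.symm, h₂.symm⟩
  · exact Or.inr ⟨h₁.symm, h₂.symm⟩

lemma adjO_col_le_or_eq_right {u w : SiteO K L} (h : adjO K L u w) :
    (w.1 : ℕ) ≤ u.1 ∨ (w.2 = u.2 ∧ (w.1 : ℕ) = u.1 + 1) := by
  rcases h with ⟨h₁, h₂⟩ | ⟨h₁, -⟩
  · omega
  · exact Or.inl (h₁ ▸ le_rfl)

lemma IsWRO.update_zero {σ : SiteO K L → ℕ} (hσ : IsWRO K L M σ) (v : SiteO K L) :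
    IsWRO K L M (update σ v 0) := by
  refine ⟨fun w => ?_, fun x y hxy => ?_⟩
  · rcases eq_or_ne w v with rfl | hw
    · simp
    · simpa [hw] using hσ.1 w
  · rcases eq_or_ne x v with rfl | hx
    · simp
    rcases eq_or_ne y v with rfl | hy
    · simp
    simpa [hx, hy] using hσ.2 x y hxy

lemma IsWRO.update_of_forall_adj {σ : SiteO K L → ℕ} (hσ : IsWRO K L M σ) {v : SiteO K L}
    {c : ℕ} (hc : c ≤ M) (hnbr : ∀ w, adjO K L v w → σ w = 0 ∨ σ w = c) :
    IsWRO K L M (update σ v c) := by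
  refine ⟨fun w => ?_, fun x y hxy => ?_⟩
  · rcases eq_or_ne w v with rfl | hw
    · simpa using hc
    · simpa [hw] using hσ.1 w
  · rcases eq_or_ne x v with rfl | hx
    · rcases eq_or_ne y x with rfl | hy
      · simp
      · rcases hnbr y hxy with h | h <;> simp [hy, h]
    · rcases eq_or_ne y v with rfl | hy
      · rcases hnbr x (adjO_symm hxy) with h | h <;> simp [hx, h]
      · simpa [hx, hy] using hσ.2 x y hxy

lemma UpdO_update {σ : SiteO K L → ℕ} {v : SiteO K L} {c : ℕ} (h : σ v = 0 ∨ c = 0)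
    (hne : σ v ≠ c) : UpdO K L σ (update σ v c) :=
  ⟨v, by simpa using h, by simpa using hne, fun _ hw => (update_of_ne hw _ _).symm⟩

lemma HO_eq_neg_ncard (σ : SiteO K L → ℕ) : HO K L σ = -((support σ).ncard : ℤ) := by
  rw [HO, ← Nat.card_coe_set_eq]
  rfl

lemma HO_update_zero {σ : SiteO K L → ℕ} {v : SiteO K L} (hv : σ v ≠ 0) :
    HO K L (update σ v 0) = HO K L σ + 1 := by
  rw [HO_eq_neg_ncard, HO_eq_neg_ncard, support_update_zero,
    ← ncard_sdiff_singleton_add_one (mem_support.2 hv)]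
  push_cast
  ring

lemma HO_update_of_eq_zero {σ : SiteO K L → ℕ} {v : SiteO K L} (hv : σ v = 0) {c : ℕ}
    (hc : c ≠ 0) : HO K L (update σ v c) = HO K L σ - 1 := by
  rw [HO_eq_neg_ncard, HO_eq_neg_ncard, support_update_of_ne_zero _ _ hc,
    ncard_insert_of_notMem (notMem_support.2 hv)]
  push_cast
  ring

end Lattice

section Paths

variable {K L M : ℕ}

lemma IsPathO.head_mem {ω : List (SiteO K L → ℕ)} {σ τ : SiteO K L → ℕ}
    (hω : IsPathO K L M ω σ τ) : σ ∈ ω :=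
  List.mem_of_mem_head? hω.2.1

lemma le_heightO {ω : List (SiteO K L → ℕ)} {η : SiteO K L → ℕ} (hη : η ∈ ω) :
    HO K L η ≤ heightO K L ω :=
  le_csSup (ω.finite_toSet.image (HO K L)).bddAbove ⟨η, hη, rfl⟩

lemma heightO_le {ω : List (SiteO K L → ℕ)} (hω : ω ≠ []) {h : ℤ}
    (hle : ∀ η ∈ ω, HO K L η ≤ h) : heightO K L ω ≤ h := by
  obtain ⟨η, hη⟩ := List.exists_mem_of_ne_nil ω hω
  refine csSup_le ⟨_, η, hη, rfl⟩ ?_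
  rintro _ ⟨η, hη, rfl⟩
  exact hle η hη

lemma commO_le_heightO {ω : List (SiteO K L → ℕ)} {σ τ : SiteO K L → ℕ}
    (hω : IsPathO K L M ω σ τ) : commO K L M σ τ ≤ heightO K L ω := by
  refine csInf_le ⟨HO K L σ, ?_⟩ ⟨ω, hω, rfl⟩
  rintro _ ⟨ω', hω', rfl⟩
  exact le_heightO hω'.head_mem

def ReachO (K L M : ℕ) (h : ℤ) (σ τ : SiteO K L → ℕ) : Prop :=
  ∃ ω, IsPathO K L M ω σ τ ∧ ∀ η ∈ ω, HO K L η ≤ h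

lemma ReachO.refl {σ : SiteO K L → ℕ} {h : ℤ} (hσ : IsWRO K L M σ) (hh : HO K L σ ≤ h) :
    ReachO K L M h σ σ :=
  ⟨[σ], ⟨List.cons_ne_nil _ _, rfl, rfl, by simpa using hσ, List.isChain_singleton _⟩,
    by simpa using hh⟩

lemma ReachO.cons {σ σ' τ : SiteO K L → ℕ} {h : ℤ} (hσ : IsWRO K L M σ)
    (hh : HO K L σ ≤ h) (hupd : UpdO K L σ σ') (hr : ReachO K L M h σ' τ) :
    ReachO K L M h σ τ := by
  obtain ⟨_ | ⟨η, ω⟩, ⟨hne, hhead, hlast, hwr, hchain⟩, hle⟩ := hr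
  · exact absurd rfl hne
  obtain rfl : η = σ' := Option.some_injective _ hhead
  refine ⟨σ :: η :: ω, ⟨List.cons_ne_nil _ _, rfl, by simpa using hlast, ?_, ?_⟩, ?_⟩
  · simpa [hσ] using hwr
  · exact List.isChain_cons_cons.2 ⟨Or.inr hupd, hchain⟩
  · simpa [hh] using hle

lemma ReachO.mono {σ τ : SiteO K L → ℕ} {h h' : ℤ} (hr : ReachO K L M h σ τ) (hle : h ≤ h') :
    ReachO K L M h' σ τ :=
  let ⟨ω, hω, hωh⟩ := hr
  ⟨ω, hω, fun η hη => (hωh η hη).trans hle⟩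

end Paths

section Reduction

variable {K L M m : ℕ}

lemma exists_adjO_empty_wrong {σ : SiteO K L → ℕ} (hσ : IsWRO K L M σ)
    (hcol : ∀ v : SiteO K L, (v.1 : ℕ) = 0 → σ v = 0 ∨ σ v = m)
    (hW : ∃ v, σ v ≠ 0 ∧ σ v ≠ m) :
    ∃ u v, adjO K L u v ∧ σ u = 0 ∧ σ v ≠ 0 ∧ σ v ≠ m ∧
      ∀ w, adjO K L u w → w ≠ v → σ w = 0 ∨ σ w = m := by
  classical
  obtain ⟨v₀, hv₀⟩ := hW
  obtain ⟨v, hvW, hmin⟩ := Finset.exists_min_image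
    (Finset.univ.filter fun v => σ v ≠ 0 ∧ σ v ≠ m) (fun v => (v.1 : ℕ))
    ⟨v₀, Finset.mem_filter.2 ⟨Finset.mem_univ _, hv₀⟩⟩
  obtain ⟨hv, hvm⟩ : σ v ≠ 0 ∧ σ v ≠ m := (Finset.mem_filter.1 hvW).2
  have hleft : ∀ w : SiteO K L, (w.1 : ℕ) < v.1 → σ w = 0 ∨ σ w = m := by
    intro w hw
    by_contra! hwW
    exact absurd (hmin w (Finset.mem_filter.2 ⟨Finset.mem_univ _, hwW⟩)) (by omega)
  have hv₀ : (v.1 : ℕ) ≠ 0 := fun h => (hcol v h).elim hv hvm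
  let u : SiteO K L := (⟨v.1 - 1, by omega⟩, v.2)
  have hu₁ : (u.1 : ℕ) + 1 = v.1 := by simp only [u]; omega
  have huv : adjO K L u v := Or.inl ⟨rfl, Or.inl hu₁⟩
  have hu : σ u = 0 := by
    rcases hleft u (by omega) with hu | hum
    · exact hu
    rcases hσ.2 u v huv with h | h | h
    · exact h
    · exact absurd h hv
    · exact absurd (h.symm.trans hum) hvm
  refine ⟨u, v, huv, hu, hv, hvm, fun w huw hwv => hleft w ?_⟩
  rcases adjO_col_le_or_eq_right huw with h | ⟨h₂, h₁⟩
  · omega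
  · exact absurd (Prod.ext (Fin.ext (by omega)) h₂ : w = v) hwv

lemma reachO_const_of_forall_eq_zero_or_eq (hm : m ≠ 0) (hmM : m ≤ M) {σ : SiteO K L → ℕ}
    (hσ : IsWRO K L M σ) (hσm : ∀ w, σ w = 0 ∨ σ w = m) :
    ReachO K L M (HO K L σ) σ (fun _ => m) := by
  by_cases hE : ∃ u, σ u = 0
  · obtain ⟨u, hu⟩ := hE
    have hH : HO K L (update σ u m) = HO K L σ - 1 := HO_update_of_eq_zero hu hm
    have hlt : {x | update σ u m x ≠ m}.ncard < {x | σ x ≠ m}.ncard := by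
      rw [setOf_update_ne_self]
      exact ncard_sdiff_singleton_lt_of_mem (by simp [hu, hm.symm])
    have hr := reachO_const_of_forall_eq_zero_or_eq hm hmM
      (hσ.update_of_forall_adj (v := u) hmM fun w _ => hσm w)
      ((forall_update_iff σ fun _ y => y = 0 ∨ y = m).2 ⟨Or.inr rfl, fun w _ => hσm w⟩)
    exact .cons hσ le_rfl (UpdO_update (Or.inl hu) (by simp [hu, hm.symm])) (hr.mono (by omega))
  · push Not at hE
    obtain rfl : σ = fun _ => m := funext fun w => (hσm w).resolve_left (hE w)
    exact .refl hσ le_rfl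
termination_by {x | σ x ≠ m}.ncard

theorem reachO_const (hm : m ≠ 0) (hmM : m ≤ M) {σ : SiteO K L → ℕ} (hσ : IsWRO K L M σ)
    (hcol : ∀ v : SiteO K L, (v.1 : ℕ) = 0 → σ v = 0 ∨ σ v = m) :
    ReachO K L M (HO K L σ + 1) σ (fun _ => m) := by
  by_cases hW : ∃ v, σ v ≠ 0 ∧ σ v ≠ m
  · obtain ⟨u, v, huv, hu, hv, hvm, hnbr⟩ := exists_adjO_empty_wrong hσ hcol hW
    have hne : u ≠ v := fun h => hv (h ▸ hu)
    set σ₁ := update σ v 0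
    set σ₂ := update σ₁ u m
    have hu₁ : σ₁ u = 0 := by simp [σ₁, hne, hu]
    have hH₁ : HO K L σ₁ = HO K L σ + 1 := HO_update_zero hv
    have hH₂ : HO K L σ₂ = HO K L σ := by
      rw [HO_update_of_eq_zero hu₁ hm, hH₁]
      ring
    have hwr₁ : IsWRO K L M σ₁ := hσ.update_zero v
    have hwr₂ : IsWRO K L M σ₂ := hwr₁.update_of_forall_adj hmM fun w huw => by
      rcases eq_or_ne w v with rfl | hwv
      · simp [σ₁]
      · simpa [σ₁, hwv] using hnbr w huw hwv
    have hlt : {x | σ₂ x ≠ m}.ncard < {x | σ x ≠ m}.ncard := by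
      rw [setOf_update_ne_self, setOf_update_ne_of_ne _ _ hm.symm, insert_eq_of_mem hvm]
      exact ncard_sdiff_singleton_lt_of_mem (by simp [hu, hm.symm])
    have hr₂ := reachO_const hm hmM hwr₂ <| forall_update_eq_zero_or_eq
      (forall_update_eq_zero_or_eq hcol (Or.inl rfl) v) (Or.inr rfl) u
    rw [hH₂] at hr₂
    exact .cons hσ (by omega) (UpdO_update (Or.inr rfl) hv)
      (.cons hwr₁ hH₁.le (UpdO_update (Or.inl hu₁) fun h => hm (hu₁.symm.trans h).symm) hr₂)
  · push Not at hW
    exact (reachO_const_of_forall_eq_zero_or_eq hm hmM hσ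
      fun w => (em (σ w = 0)).imp_right (hW w)).mono (by omega)
termination_by {x | σ x ≠ m}.ncard

end Reduction

theorem reduction_algorithm_open_general (K L M : ℕ)
    (m : ℕ) (hm1 : 1 ≤ m) (hmM : m ≤ M)
    (σ : SiteO K L → ℕ) (hσ : IsWRO K L M σ)
    (hcol : ∀ v : SiteO K L, (v.1 : ℕ) = 0 → σ v = 0 ∨ σ v = m) :
    (∃ ω : List (SiteO K L → ℕ),
      IsPathO K L M ω σ (fun _ => m) ∧ heightO K L ω ≤ HO K L σ + 1) ∧
    commO K L M σ (fun _ => m) - HO K L σ ≤ 1 := by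
  obtain ⟨ω, hω, hle⟩ := reachO_const (by omega) hmM hσ hcol
  have hheight := heightO_le hω.1 hle
  exact ⟨⟨ω, hω, hheight⟩, by linarith [commO_le_heightO hω]⟩

/-- Reduction algorithm, open boundary conditions: if `σ ∈ X` has only empty
sites or particles of type `m` in the first column `c_0`, then there is a path
`ω : σ → s^(m)` with `Φ_ω ≤ H(σ) + 1`; in particular
`Φ(σ, s^(m)) - H(σ) ≤ 1`. -/
theorem reduction_algorithm_open (K L M : ℕ)
    (hK : 2 ≤ K) (hL : 2 ≤ L) (hM : 2 ≤ M)
    (m : ℕ) (hm1 : 1 ≤ m) (hmM : m ≤ M)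
    (σ : SiteO K L → ℕ) (hσ : IsWRO K L M σ)
    (hcol : ∀ v : SiteO K L, (v.1 : ℕ) = 0 → σ v = 0 ∨ σ v = m) :
    (∃ ω : List (SiteO K L → ℕ),
      IsPathO K L M ω σ (fun _ => m) ∧ heightO K L ω ≤ HO K L σ + 1) ∧
    commO K L M σ (fun _ => m) - HO K L σ ≤ 1 :=
  reduction_algorithm_open_general K L M m hm1 hmM σ hσ hcol
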